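/- For all real υ ≥ -1 and λ ∈ [0,1), exp(λυ - ψ_E(λ)υ²) ≤ 1 + λυ, where ψ_E(λ) = -λ - log(1-λ). -/

import Mathlib

/-!
Take logarithms and regard the gap `log (1 + s υ) - s υ + ψ_E(s) υ²` as a function of the
parameter `s ∈ [0, 1)` rather than of `υ`. It vanishes at `s = 0`, and its derivative
`s² υ² (1 + υ) / ((1 - s)(1 + s υ))` is nonnegative because `υ ≥ -1`; hence the gap is
nonnegative at `s = λ`.
-/

open Real Set

noncomputable def psiE (l : ℝ) : ℝ := -l - log (1 - l)

lemma hasDerivAt_psiE {s : ℝ} (hs : s < 1) : HasDerivAt psiE (s / (1 - s)) s := by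
  have h1s : 1 - s ≠ 0 := by linarith
  have hlog : HasDerivAt (fun x => log (1 - x)) (-1 / (1 - s)) s :=
    ((hasDerivAt_id s).const_sub 1).log h1s |>.congr_deriv (by simp)
  exact ((hasDerivAt_id s).neg.sub hlog).congr_deriv (by field_simp; ring)

noncomputable def fanGap (υ s : ℝ) : ℝ := log (1 + s * υ) - s * υ + psiE s * υ ^ 2

lemma hasDerivAt_fanGap {υ s : ℝ} (hυ : -1 ≤ υ) (hs0 : 0 ≤ s) (hs1 : s < 1) :
    HasDerivAt (fanGap υ) (s ^ 2 * υ ^ 2 * (1 + υ) / ((1 - s) * (1 + s * υ))) s := by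
  have h1s : 0 < 1 - s := by linarith
  have hsυ : 0 < 1 + s * υ := by nlinarith
  have hlog : HasDerivAt (fun x => log (1 + x * υ)) (υ / (1 + s * υ)) s :=
    (((hasDerivAt_id s).mul_const υ).const_add 1).log hsυ.ne' |>.congr_deriv (by simp)
  refine ((hlog.sub ((hasDerivAt_id s).mul_const υ)).add
    ((hasDerivAt_psiE hs1).mul_const (υ ^ 2))).congr_deriv ?_
  rw [eq_div_iff (by positivity)]
  have e1 : υ / (1 + s * υ) * (1 + s * υ) = υ := div_mul_cancel₀ _ hsυ.ne'
  have e2 : s / (1 - s) * (1 - s) = s := div_mul_cancel₀ _ h1s.ne'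
  linear_combination (1 - s) * e1 + υ ^ 2 * (1 + s * υ) * e2

lemma monotoneOn_fanGap {υ : ℝ} (hυ : -1 ≤ υ) : MonotoneOn (fanGap υ) (Ico 0 1) := by
  have hderiv : ∀ s ∈ Ico (0 : ℝ) 1, HasDerivAt (fanGap υ)
      (s ^ 2 * υ ^ 2 * (1 + υ) / ((1 - s) * (1 + s * υ))) s :=
    fun s hs => hasDerivAt_fanGap hυ hs.1 hs.2
  refine monotoneOn_of_hasDerivWithinAt_nonneg (convex_Ico 0 1)
    (fun s hs => (hderiv s hs).continuousAt.continuousWithinAt)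
    (fun s hs => (hderiv s (interior_subset hs)).hasDerivWithinAt) fun s hs => ?_
  rw [interior_Ico] at hs
  have h1s : 0 < 1 - s := by linarith [hs.2]
  have hsυ : 0 < 1 + s * υ := by nlinarith [hs.1, hs.2]
  have h1υ : 0 ≤ 1 + υ := by linarith
  positivity

lemma sub_psiE_mul_sq_le_log {υ l : ℝ} (hυ : -1 ≤ υ) (hl0 : 0 ≤ l) (hl1 : l < 1) :
    l * υ - psiE l * υ ^ 2 ≤ log (1 + l * υ) := by
  have h := monotoneOn_fanGap hυ ⟨le_rfl, zero_lt_one⟩ ⟨hl0, hl1⟩ hl0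
  have h0 : fanGap υ 0 = 0 := by simp [fanGap, psiE]
  rw [h0, fanGap] at h
  linarith

theorem fan_inequality (υ l : ℝ) (hυ : -1 ≤ υ) (hl0 : 0 ≤ l) (hl1 : l < 1) :
    Real.exp (l * υ - (-l - Real.log (1 - l)) * υ ^ 2) ≤ 1 + l * υ := by
  have hpos : 0 < 1 + l * υ := by nlinarith
  calc Real.exp (l * υ - psiE l * υ ^ 2) ≤ Real.exp (log (1 + l * υ)) :=
        exp_le_exp.mpr (sub_psiE_mul_sq_le_log hυ hl0 hl1)
    _ = 1 + l * υ := exp_log hpos
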